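/- Let (X,Y) be a centered bivariate Gaussian vector with Var(X) = Var(Y) = C(K,2) and Cov(X,Y) = C(l,2), where 2 ≤ l ≤ K-1 are integers (so the covariance matrix is nonsingular). Then for any γ > 0, P(X ≥ γ·C(K,2) and Y ≥ γ·C(K,2)) ≤ (1/(2πγ²)) · [C(K,2) + C(l,2)]² / (C(K,2)²·√(C(K,2)² - C(l,2)²)) · exp(-γ²·C(K,2)²/(C(K,2) + C(l,2))). -/

import Mathlib

/-!
Writing `X = A + B₁`, `Y = A + B₂` and integrating out `A` (completing the square) shows that
`(X, Y)` has the Gaussian density `f` with covariance `Σ = !![a, b; b, a]`, where `a = C(K,2)`,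
`b = C(l,2)`. Savage's argument: since `Σ⁻¹` is positive definite, expanding the quadratic form at
`c + z` and dropping `⟪z, Σ⁻¹ z⟫ ≥ 0` gives `f (c + z) ≤ f c * exp (-⟪Σ⁻¹ c, z⟫)`. For
`c = (γa, γa)` we have `Σ⁻¹ c = γa / (a + b) • (1, 1)`, and integrating the exponential over the
quadrant `z ≥ 0` produces the factor `((a + b) / (γa))²`.
-/

open MeasureTheory ProbabilityTheory Real Set
open scoped ENNReal NNReal

lemma Nat.choose_lt_choose {n m k : ℕ} (hk : 0 < k) (hkn : k ≤ n + 1) (hnm : n < m) :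
    n.choose k < m.choose k := by
  obtain ⟨j, rfl⟩ := Nat.exists_eq_succ_of_ne_zero hk.ne'
  calc n.choose (j + 1) < n.choose j + n.choose (j + 1) :=
        Nat.lt_add_of_pos_left (Nat.choose_pos (by omega))
    _ = (n + 1).choose (j + 1) := (Nat.choose_succ_succ n j).symm
    _ ≤ m.choose (j + 1) := Nat.choose_le_choose _ hnm

namespace ProbabilityTheory

/-- The density of the centered Gaussian on `ℝ²` with covariance matrix `!![s, r; r, s]`. -/
noncomputable def bivariateGaussianPDFReal (s r x y : ℝ) : ℝ :=
  exp (-(s * x ^ 2 + s * y ^ 2 - 2 * r * x * y) / (2 * (s ^ 2 - r ^ 2))) /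
    (2 * π * √(s ^ 2 - r ^ 2))

lemma bivariateGaussianPDFReal_nonneg (s r x y : ℝ) : 0 ≤ bivariateGaussianPDFReal s r x y := by
  unfold bivariateGaussianPDFReal; positivity

lemma gaussianPDFReal_mul_gaussianPDFReal_mul_gaussianPDFReal {w v : ℝ≥0} (hw : w ≠ 0)
    (hv : v ≠ 0) (x y u : ℝ) :
    gaussianPDFReal 0 w u * gaussianPDFReal u v x * gaussianPDFReal u v y =
      bivariateGaussianPDFReal (v + w) w x y *
        gaussianPDFReal (w * (x + y) / (v + 2 * w)) (w * v / (v + 2 * w)) u := by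
  have hv' : (0 : ℝ) < v := by positivity
  have hdet : ((v : ℝ) + w) ^ 2 - (w : ℝ) ^ 2 = v * (v + 2 * w) := by ring
  have hsqrt : √(2 * π * w) * √(2 * π * v) * √(2 * π * v) =
      2 * π * √(v * (v + 2 * w)) * √(2 * π * (w * v / (v + 2 * w))) := by
    rw [mul_assoc, mul_self_sqrt (by positivity), mul_assoc (2 * π), ← sqrt_mul (by positivity),
      show v * (v + 2 * w) * (2 * π * (w * v / (v + 2 * w))) = (v : ℝ) ^ 2 * (2 * π * w) by
        field_simp, sqrt_mul (sq_nonneg (v : ℝ)), sqrt_sq hv'.le]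
    ring
  have hexp : ∀ e₁ e₂ e₃ e₄ e₅ : ℝ, e₁ + e₂ + e₃ = e₄ + e₅ →
      (√(2 * π * w))⁻¹ * exp e₁ * ((√(2 * π * v))⁻¹ * exp e₂) * ((√(2 * π * v))⁻¹ * exp e₃) =
        exp e₄ / (2 * π * √(v * (v + 2 * w))) *
          ((√(2 * π * (w * v / (v + 2 * w))))⁻¹ * exp e₅) := by
    intro e₁ e₂ e₃ e₄ e₅ he
    calc _ = (√(2 * π * w) * √(2 * π * v) * √(2 * π * v))⁻¹ * exp (e₁ + e₂ + e₃) := by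
          rw [exp_add, exp_add]; ring
      _ = _ := by rw [hsqrt, he, exp_add]; ring
  simp only [gaussianPDFReal, bivariateGaussianPDFReal, hdet, NNReal.coe_div, NNReal.coe_mul,
    NNReal.coe_add, NNReal.coe_ofNat]
  apply hexp
  field_simp
  ring

lemma lintegral_gaussianPDF_mul_gaussianPDF_mul_gaussianPDF {w v : ℝ≥0} (hw : w ≠ 0)
    (hv : v ≠ 0) (x y : ℝ) :
    ∫⁻ u, gaussianPDF 0 w u * gaussianPDF u v x * gaussianPDF u v y =
      ENNReal.ofReal (bivariateGaussianPDFReal (v + w) w x y) := by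
  have hτ : w * v / (v + 2 * w) ≠ 0 := by positivity
  simp_rw [gaussianPDF, ← ENNReal.ofReal_mul (gaussianPDFReal_nonneg _ _ _),
    ← ENNReal.ofReal_mul (mul_nonneg (gaussianPDFReal_nonneg _ _ _) (gaussianPDFReal_nonneg _ _ _)),
    gaussianPDFReal_mul_gaussianPDFReal_mul_gaussianPDFReal hw hv,
    ENNReal.ofReal_mul (bivariateGaussianPDFReal_nonneg _ _ _ _)]
  rw [lintegral_const_mul _ (by fun_prop), lintegral_gaussianPDFReal_eq_one _ hτ, mul_one]

lemma map_add_add_gaussianReal_prod {w v : ℝ≥0} (hw : w ≠ 0) (hv : v ≠ 0) :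
    ((gaussianReal 0 w).prod ((gaussianReal 0 v).prod (gaussianReal 0 v))).map
        (fun p => (p.1 + p.2.1, p.1 + p.2.2)) =
      volume.withDensity
        (fun p : ℝ × ℝ => ENNReal.ofReal (bivariateGaussianPDFReal (v + w) w p.1 p.2)) := by
  -- Conditionally on the first coordinate `u`, the image is `(u + V₁, u + V₂)`.
  have hshift : ∀ u, ((gaussianReal 0 v).prod (gaussianReal 0 v)).map
      (fun q => (u + q.1, u + q.2)) =
        volume.withDensity (fun q : ℝ × ℝ => gaussianPDF u v q.1 * gaussianPDF u v q.2) := by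
    intro u
    rw [← Prod.map_def, ← Measure.map_prod_map _ _ (measurable_const_add u)
      (measurable_const_add u), gaussianReal_map_const_add, zero_add,
      gaussianReal_of_var_ne_zero _ hv,
      prod_withDensity (measurable_gaussianPDF _ _) (measurable_gaussianPDF _ _),
      ← Measure.volume_eq_prod]
  ext S hS
  have hT : Measurable fun p : ℝ × ℝ × ℝ => (p.1 + p.2.1, p.1 + p.2.2) := by fun_prop
  have hsection : ∀ u, ((gaussianReal 0 v).prod (gaussianReal 0 v))
      (Prod.mk u ⁻¹' ((fun p : ℝ × ℝ × ℝ => (p.1 + p.2.1, p.1 + p.2.2)) ⁻¹' S)) =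
        ∫⁻ q in S, gaussianPDF u v q.1 * gaussianPDF u v q.2 := by
    intro u
    rw [← withDensity_apply _ hS, ← hshift, Measure.map_apply (by fun_prop) hS]
    rfl
  rw [Measure.map_apply hT hS, Measure.prod_apply (hT hS), lintegral_congr hsection,
    gaussianReal_of_var_ne_zero _ hw,
    lintegral_withDensity_eq_lintegral_mul _ (measurable_gaussianPDF _ _) ?_,
    withDensity_apply _ hS]
  · simp only [Pi.mul_apply]
    simp_rw [← lintegral_const_mul' _ _ gaussianPDF_ne_top, ← mul_assoc]
    rw [lintegral_lintegral_swap (by fun_prop : Measurable fun p : ℝ × ℝ × ℝ =>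
      gaussianPDF 0 w p.1 * gaussianPDF p.1 v p.2.1 * gaussianPDF p.1 v p.2.2).aemeasurable]
    simp_rw [lintegral_gaussianPDF_mul_gaussianPDF_mul_gaussianPDF hw hv]
  · exact Measurable.lintegral_prod_right (by fun_prop : Measurable fun p : ℝ × ℝ × ℝ =>
      gaussianPDF p.1 v p.2.1 * gaussianPDF p.1 v p.2.2)

lemma iIndepFun.map_prodMk_prodMk_eq_prod {Ω β : Type*} [MeasurableSpace Ω] [MeasurableSpace β]
    {μ : Measure Ω} [IsFiniteMeasure μ] {X Y Z : Ω → β} (hX : Measurable X) (hY : Measurable Y)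
    (hZ : Measurable Z) (h : iIndepFun ![X, Y, Z] μ) :
    μ.map (fun ω => (X ω, Y ω, Z ω)) = (μ.map X).prod ((μ.map Y).prod (μ.map Z)) := by
  have hmeas : ∀ i, Measurable (![X, Y, Z] i) := by
    intro i; fin_cases i <;> assumption
  have hYZ_X : IndepFun (fun ω => (Y ω, Z ω)) X μ :=
    h.indepFun_prodMk hmeas 1 2 0 (by decide) (by decide)
  have hYZ : IndepFun Y Z μ := h.indepFun (show (1 : Fin 3) ≠ 2 by decide)
  rw [hYZ_X.symm.map_prod_eq_prod_map_map hX.aemeasurable (hY.prodMk hZ).aemeasurable,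
    hYZ.map_prod_eq_prod_map_map hY.aemeasurable hZ.aemeasurable]

lemma iIndepFun.map_add_add_eq_withDensity {Ω : Type*} [MeasurableSpace Ω] {μ : Measure Ω}
    [IsFiniteMeasure μ] {U V₁ V₂ : Ω → ℝ} (hU : Measurable U) (hV₁ : Measurable V₁)
    (hV₂ : Measurable V₂) (h : iIndepFun ![U, V₁, V₂] μ) {w v : ℝ≥0} (hw : w ≠ 0) (hv : v ≠ 0)
    (hUlaw : μ.map U = gaussianReal 0 w) (hV₁law : μ.map V₁ = gaussianReal 0 v)
    (hV₂law : μ.map V₂ = gaussianReal 0 v) :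
    μ.map (fun ω => (U ω + V₁ ω, U ω + V₂ ω)) =
      volume.withDensity
        (fun p : ℝ × ℝ => ENNReal.ofReal (bivariateGaussianPDFReal (v + w) w p.1 p.2)) := by
  have hjoint := h.map_prodMk_prodMk_eq_prod hU hV₁ hV₂
  rw [hUlaw, hV₁law, hV₂law] at hjoint
  rw [← map_add_add_gaussianReal_prod hw hv, ← hjoint, Measure.map_map (by fun_prop) (by fun_prop)]
  rfl

lemma bivariateGaussianPDFReal_le {s r : ℝ} (hrs : |r| < s) (c x y : ℝ) :
    bivariateGaussianPDFReal s r x y ≤ bivariateGaussianPDFReal s r c c *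
      exp (-(c / (s + r) * (x - c))) * exp (-(c / (s + r) * (y - c))) := by
  obtain ⟨hsr, hrs'⟩ := abs_lt.mp hrs
  have hdet : 0 < s ^ 2 - r ^ 2 := by nlinarith
  have hsr0 : s + r ≠ 0 := by linarith
  -- `2 (s z₁² + s z₂² - 2 r z₁ z₂) = (s - r) (z₁ + z₂)² + (s + r) (z₁ - z₂)²`
  have hquad : 0 ≤ s * (x - c) ^ 2 + s * (y - c) ^ 2 - 2 * r * (x - c) * (y - c) := by
    nlinarith [mul_nonneg (by linarith : 0 ≤ s - r) (sq_nonneg (x + y - 2 * c)),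
      mul_nonneg (by linarith : 0 ≤ s + r) (sq_nonneg (x - y))]
  unfold bivariateGaussianPDFReal
  rw [div_mul_eq_mul_div, div_mul_eq_mul_div, ← exp_add, ← exp_add]
  gcongr
  rw [← sub_nonneg]
  convert div_nonneg hquad (by positivity : (0 : ℝ) ≤ 2 * (s ^ 2 - r ^ 2)) using 1
  field_simp
  ring

lemma bivariateGaussianPDFReal_self {s r : ℝ} (hsr : s + r ≠ 0) (hrs : s - r ≠ 0) (c : ℝ) :
    bivariateGaussianPDFReal s r c c = exp (-c ^ 2 / (s + r)) / (2 * π * √(s ^ 2 - r ^ 2)) := by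
  unfold bivariateGaussianPDFReal
  congr 2
  rw [show s ^ 2 - r ^ 2 = (s + r) * (s - r) by ring]
  field_simp
  ring

lemma lintegral_Ici_exp_neg_mul_sub {d : ℝ} (hd : 0 < d) (c : ℝ) :
    ∫⁻ x in Ici c, ENNReal.ofReal (exp (-(d * (x - c)))) = ENNReal.ofReal d⁻¹ := by
  have hfun : (fun x => exp (-(d * (x - c)))) = fun x => exp (d * c) * exp (-d * x) := by
    ext x; rw [← exp_add]; ring_nf
  rw [← restrict_Ioi_eq_restrict_Ici, ← ofReal_integral_eq_lintegral_ofReal, hfun,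
    integral_const_mul, integral_exp_mul_Ioi (by linarith), neg_div_neg_eq,
    mul_div_assoc', ← exp_add]
  · simp
  · rw [hfun]; exact (integrableOn_exp_mul_Ioi (by linarith) c).const_mul _
  · exact ae_of_all _ fun x => (exp_pos _).le

lemma withDensity_bivariateGaussianPDFReal_Ici_prod_Ici_le {s r : ℝ} (hrs : |r| < s) {c : ℝ}
    (hc : 0 < c) :
    volume.withDensity (fun p : ℝ × ℝ => ENNReal.ofReal (bivariateGaussianPDFReal s r p.1 p.2))
        (Ici c ×ˢ Ici c) ≤
      ENNReal.ofReal (exp (-c ^ 2 / (s + r)) / (2 * π * √(s ^ 2 - r ^ 2)) * ((s + r) / c) ^ 2) := by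
  obtain ⟨hsr, hrs'⟩ := abs_lt.mp hrs
  set d := c / (s + r)
  have hd : 0 < d := div_pos hc (by linarith)
  set K := bivariateGaussianPDFReal s r c c
  have hK : 0 ≤ K := bivariateGaussianPDFReal_nonneg _ _ _ _
  have hK_eq : K = exp (-c ^ 2 / (s + r)) / (2 * π * √(s ^ 2 - r ^ 2)) :=
    bivariateGaussianPDFReal_self (by linarith) (by linarith) c
  rw [withDensity_apply _ (measurableSet_Ici.prod measurableSet_Ici), Measure.volume_eq_prod,
    ← Measure.prod_restrict]
  calc _ ≤ ∫⁻ p, ENNReal.ofReal K * (ENNReal.ofReal (exp (-(d * (p.1 - c)))) *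
          ENNReal.ofReal (exp (-(d * (p.2 - c)))))
            ∂(volume.restrict (Ici c)).prod (volume.restrict (Ici c)) := by
        refine lintegral_mono fun p => ?_
        rw [← ENNReal.ofReal_mul (exp_pos _).le, ← ENNReal.ofReal_mul hK, ← mul_assoc]
        exact ENNReal.ofReal_le_ofReal (bivariateGaussianPDFReal_le hrs c p.1 p.2)
    _ = ENNReal.ofReal K * (ENNReal.ofReal d⁻¹ * ENNReal.ofReal d⁻¹) := by
        rw [lintegral_const_mul _ (by fun_prop),
          lintegral_prod_mul (f := fun x => ENNReal.ofReal (exp (-(d * (x - c)))))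
            (g := fun y => ENNReal.ofReal (exp (-(d * (y - c))))) (by fun_prop) (by fun_prop),
          lintegral_Ici_exp_neg_mul_sub hd]
    _ = _ := by
        rw [← ENNReal.ofReal_mul (by positivity), ← ENNReal.ofReal_mul hK, inv_div, hK_eq]
        ring_nf

end ProbabilityTheory

theorem bivariate_gaussian_joint_tail
    {Ω : Type*} [MeasurableSpace Ω] (μ : Measure Ω) [IsProbabilityMeasure μ]
    (K l : ℕ) (hl : 2 ≤ l) (hlK : l ≤ K - 1)
    (A B₁ B₂ : Ω → ℝ)
    (hmeas : Measurable A ∧ Measurable B₁ ∧ Measurable B₂)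
    (hindep : iIndepFun ![A, B₁, B₂] μ)
    (hA : μ.map A = gaussianReal 0 ((l.choose 2 : ℕ) : NNReal))
    (hB₁ : μ.map B₁ = gaussianReal 0 ((K.choose 2 - l.choose 2 : ℕ) : NNReal))
    (hB₂ : μ.map B₂ = gaussianReal 0 ((K.choose 2 - l.choose 2 : ℕ) : NNReal))
    (γ : ℝ) (hγ : 0 < γ) :
    (μ {ω | γ * (K.choose 2 : ℝ) ≤ A ω + B₁ ω ∧
            γ * (K.choose 2 : ℝ) ≤ A ω + B₂ ω}).toReal
      ≤ (1 / (2 * Real.pi * γ ^ 2)) *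
          ((K.choose 2 : ℝ) + (l.choose 2 : ℝ)) ^ 2 /
          ((K.choose 2 : ℝ) ^ 2 *
            Real.sqrt ((K.choose 2 : ℝ) ^ 2 - (l.choose 2 : ℝ) ^ 2)) *
          Real.exp (-γ ^ 2 * (K.choose 2 : ℝ) ^ 2 /
            ((K.choose 2 : ℝ) + (l.choose 2 : ℝ))) := by
  obtain ⟨hmA, hmB₁, hmB₂⟩ := hmeas
  have hba : l.choose 2 < K.choose 2 := Nat.choose_lt_choose two_pos (by omega) (by omega)
  have hlaw := hindep.map_add_add_eq_withDensity hmA hmB₁ hmB₂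
    (by exact_mod_cast (Nat.choose_pos hl).ne') (by exact_mod_cast (Nat.sub_pos_of_lt hba).ne')
    hA hB₁ hB₂
  rw [show (((K.choose 2 - l.choose 2 : ℕ) : ℝ≥0) : ℝ) + ((l.choose 2 : ℕ) : ℝ≥0) = K.choose 2 by
    rw [NNReal.coe_natCast, NNReal.coe_natCast, Nat.cast_sub hba.le, sub_add_cancel]] at hlaw
  set a : ℝ := ((K.choose 2 : ℕ) : ℝ)
  set b : ℝ := ((l.choose 2 : ℕ) : ℝ)
  have hb : 0 < b := Nat.cast_pos.mpr (Nat.choose_pos hl)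
  have hba' : b < a := Nat.cast_lt.mpr hba
  have hevent : {ω | γ * a ≤ A ω + B₁ ω ∧ γ * a ≤ A ω + B₂ ω} =
      (fun ω => (A ω + B₁ ω, A ω + B₂ ω)) ⁻¹' (Ici (γ * a) ×ˢ Ici (γ * a)) := rfl
  rw [hevent, ← Measure.map_apply (by fun_prop) (measurableSet_Ici.prod measurableSet_Ici), hlaw]
  refine (ENNReal.toReal_mono ENNReal.ofReal_ne_top
    (withDensity_bivariateGaussianPDFReal_Ici_prod_Ici_le (abs_lt.mpr ⟨by linarith, hba'⟩)
      (by nlinarith))).trans_eq ?_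
  have hdet : 0 < √(a ^ 2 - b ^ 2) := sqrt_pos.mpr (by nlinarith)
  rw [ENNReal.toReal_ofReal (by positivity)]
  field_simp
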